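/- Let π : G → End_K(M) be a partial representation of a group G on a K-module M. Define M_g := Im π(g) and α_g : M_{g⁻¹} → M_g as the restriction of π(g). Then α = (G, M, {M_g}, {α_g}) is a partial action of G on the K-module M; in particular each α_g is a well-defined linear bijection M_{g⁻¹} → M_g with inverse α_{g⁻¹}, M_1 = M, α_1 = id, α_g(M_{g⁻¹} ∩ M_{g⁻¹h}) ⊆ M_g ∩ M_h, and α_g(α_h(m)) = α_{gh}(m) for all m ∈ M_{h⁻¹} ∩ M_{h⁻¹g⁻¹}. -/

import Mathlib

/-!
Write `M_g` for the range of `π g`. The axiom `π g ∘ π h ∘ π h⁻¹ = π (g * h) ∘ π h⁻¹` says exactly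
that `π g ∘ π h = π (g * h)` on `M_{h⁻¹}`. Taking `h = g⁻¹` shows that `π g ∘ π g⁻¹` is the identity
on `M_g`, so `π g` and `π g⁻¹` are mutually inverse between `M_{g⁻¹}` and `M_g`; and writing
`g = h * (h⁻¹ * g)` shows that `π g` maps `M_{g⁻¹ * h}` into `M_h`.
-/

namespace PartialRepresentation

open LinearMap

variable {K G M : Type*} [Semiring K] [Group G] [AddCommMonoid M] [Module K M]
  {π : G → M →ₗ[K] M}

theorem apply_apply_of_mem_range_inv
    (h3 : ∀ (g h : G) (m : M), π g (π h (π h⁻¹ m)) = π (g * h) (π h⁻¹ m))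
    {g h : G} {m : M} (hm : m ∈ range (π h⁻¹)) : π g (π h m) = π (g * h) m := by
  obtain ⟨x, rfl⟩ := hm
  exact h3 g h x

theorem apply_inv_apply_of_mem_range (h1 : ∀ m : M, π 1 m = m)
    (h3 : ∀ (g h : G) (m : M), π g (π h (π h⁻¹ m)) = π (g * h) (π h⁻¹ m))
    {g : G} {m : M} (hm : m ∈ range (π g)) : π g (π g⁻¹ m) = m := by
  rw [apply_apply_of_mem_range_inv h3 (by rwa [inv_inv]), mul_inv_cancel, h1]

theorem apply_mem_range_of_mem_range_inv_mul
    (h3 : ∀ (g h : G) (m : M), π g (π h (π h⁻¹ m)) = π (g * h) (π h⁻¹ m))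
    {g h : G} {m : M} (hm : m ∈ range (π (g⁻¹ * h))) : π g m ∈ range (π h) := by
  have hm' : m ∈ range (π (h⁻¹ * g)⁻¹) := by rwa [mul_inv_rev, inv_inv]
  refine ⟨π (h⁻¹ * g) m, ?_⟩
  rw [apply_apply_of_mem_range_inv h3 hm', mul_inv_cancel_left]

end PartialRepresentation

theorem stmt7_general {K G M : Type*} [CommRing K] [Group G]
    [AddCommGroup M] [Module K M]
    (π : G → M →ₗ[K] M)
    (h1 : ∀ m : M, π 1 m = m)
    (h3 : ∀ (g h : G) (m : M), π g (π h (π h⁻¹ m)) = π (g * h) (π h⁻¹ m)) :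
    -- M₁ = M and α₁ = id
    (LinearMap.range (π 1) = ⊤) ∧ (∀ m : M, π 1 m = m) ∧
    -- α_g maps M_{g⁻¹} into M_g (well-definedness of α_g : M_{g⁻¹} → M_g)
    (∀ (g : G) (m : M), m ∈ LinearMap.range (π g⁻¹) → π g m ∈ LinearMap.range (π g)) ∧
    -- α_g is injective on M_{g⁻¹} with inverse α_{g⁻¹}, and surjective onto M_g
    (∀ (g : G) (m : M), m ∈ LinearMap.range (π g⁻¹) → π g⁻¹ (π g m) = m) ∧
    (∀ (g : G) (m : M), m ∈ LinearMap.range (π g) →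
      ∃ n ∈ LinearMap.range (π g⁻¹), π g n = m) ∧
    -- α_g (M_{g⁻¹} ∩ M_{g⁻¹h}) ⊆ M_g ∩ M_h
    (∀ (g h : G) (m : M), m ∈ LinearMap.range (π g⁻¹) →
      m ∈ LinearMap.range (π (g⁻¹ * h)) →
      π g m ∈ LinearMap.range (π g) ∧ π g m ∈ LinearMap.range (π h)) ∧
    -- α_g ∘ α_h = α_{gh} on M_{h⁻¹} ∩ M_{h⁻¹g⁻¹}
    (∀ (g h : G) (m : M), m ∈ LinearMap.range (π h⁻¹) →
      m ∈ LinearMap.range (π (h⁻¹ * g⁻¹)) → π g (π h m) = π (g * h) m) := by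
  open PartialRepresentation in
  refine ⟨LinearMap.range_eq_top.2 fun m => ⟨m, h1 m⟩, h1, fun g m _ => ⟨m, rfl⟩, ?_, ?_, ?_, ?_⟩
  · intro g m hm
    simpa only [inv_inv] using apply_inv_apply_of_mem_range h1 h3 (g := g⁻¹) hm
  · intro g m hm
    exact ⟨π g⁻¹ m, ⟨m, rfl⟩, apply_inv_apply_of_mem_range h1 h3 hm⟩
  · intro g h m _ hm
    exact ⟨⟨m, rfl⟩, apply_mem_range_of_mem_range_inv_mul h3 hm⟩
  · intro g h m hm _
    exact apply_apply_of_mem_range_inv h3 hm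

/-- A partial representation `π` of `G` on a `K`-module `M` induces a partial
action: with `M_g = range (π g)` and `α_g = π g` restricted to `M_{g⁻¹}`, the
data `(G, M, {M_g}, {α_g})` is a partial action of `G` on the module `M`. -/
theorem stmt7 {K G M : Type*} [CommRing K] [Group G]
    [AddCommGroup M] [Module K M]
    (π : G → M →ₗ[K] M)
    (h1 : ∀ m : M, π 1 m = m)
    (h2 : ∀ (g h : G) (m : M), π g⁻¹ (π g (π h m)) = π g⁻¹ (π (g * h) m))
    (h3 : ∀ (g h : G) (m : M), π g (π h (π h⁻¹ m)) = π (g * h) (π h⁻¹ m)) :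
    -- M₁ = M and α₁ = id
    (LinearMap.range (π 1) = ⊤) ∧ (∀ m : M, π 1 m = m) ∧
    -- α_g maps M_{g⁻¹} into M_g (well-definedness of α_g : M_{g⁻¹} → M_g)
    (∀ (g : G) (m : M), m ∈ LinearMap.range (π g⁻¹) → π g m ∈ LinearMap.range (π g)) ∧
    -- α_g is injective on M_{g⁻¹} with inverse α_{g⁻¹}, and surjective onto M_g
    (∀ (g : G) (m : M), m ∈ LinearMap.range (π g⁻¹) → π g⁻¹ (π g m) = m) ∧
    (∀ (g : G) (m : M), m ∈ LinearMap.range (π g) →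
      ∃ n ∈ LinearMap.range (π g⁻¹), π g n = m) ∧
    -- α_g (M_{g⁻¹} ∩ M_{g⁻¹h}) ⊆ M_g ∩ M_h
    (∀ (g h : G) (m : M), m ∈ LinearMap.range (π g⁻¹) →
      m ∈ LinearMap.range (π (g⁻¹ * h)) →
      π g m ∈ LinearMap.range (π g) ∧ π g m ∈ LinearMap.range (π h)) ∧
    -- α_g ∘ α_h = α_{gh} on M_{h⁻¹} ∩ M_{h⁻¹g⁻¹}
    (∀ (g h : G) (m : M), m ∈ LinearMap.range (π h⁻¹) →
      m ∈ LinearMap.range (π (h⁻¹ * g⁻¹)) → π g (π h m) = π (g * h) m) :=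
  stmt7_general π h1 h3
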